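/- Let A_1 = [[−1/√2, −1/2 − i/2], [−1/2 + i/2, 1/√2]], A_2 = [[1/2 + i/2, 1/√2], [−1/√2, 1/2 − i/2]], A_3 = [[1/2 − i/2, i/√2], [i/√2, 1/2 + i/2]] be the given 2×2 complex matrices (each is unitary). Then: (i) for all (z_0, z_1, z_2, z_3) ∈ ℂ^4, det(z_0 I + z_1A_1 + z_2A_2 + z_3A_3) = det(z_0 I − z_1A_1 + z_2A_2 + z_3A_3) = z_0² + z_0(z_2 + z_3) − z_1² + z_2² + z_3²; and (ii) there exists no unitary 2×2 matrix U such that UA_1U* = −A_1, UA_2U* = A_2, and UA_3U* = A_3. -/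

import Mathlib

open Matrix Complex

noncomputable def A₁ : Matrix (Fin 2) (Fin 2) ℂ :=
  !![-(1 / (Real.sqrt 2 : ℂ)), -(1 / 2) - I / 2;
     -(1 / 2) + I / 2, 1 / (Real.sqrt 2 : ℂ)]

noncomputable def A₂ : Matrix (Fin 2) (Fin 2) ℂ :=
  !![1 / 2 + I / 2, 1 / (Real.sqrt 2 : ℂ);
     -(1 / (Real.sqrt 2 : ℂ)), 1 / 2 - I / 2]

noncomputable def A₃ : Matrix (Fin 2) (Fin 2) ℂ :=
  !![1 / 2 - I / 2, I / (Real.sqrt 2 : ℂ);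
     I / (Real.sqrt 2 : ℂ), 1 / 2 + I / 2]

/-!
The characteristic polynomial of `(-A₁, A₂, A₃)` is that of `(A₁, A₂, A₃)` with `-z₁` substituted
for `z₁`, and the latter only involves `z₁ ^ 2`. The two triples are nevertheless
not unitarily equivalent, because the trace of a word in the matrices is a unitary invariant and
`tr (A₁ A₂ A₃) = -√2 i` would have to equal `tr ((-A₁) A₂ A₃) = √2 i`.
-/

namespace Matrix

variable {n R : Type*} [Fintype n] [DecidableEq n]

lemma trace_conj_of_mul_eq_one [CommSemiring R] {U V : Matrix n n R} (hVU : V * U = 1)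
    (A : Matrix n n R) : trace (U * A * V) = trace A := by
  rw [trace_mul_cycle, hVU, Matrix.one_mul]

lemma conj_mul_conj_of_mul_eq_one [Semiring R] {U V : Matrix n n R} (hVU : V * U = 1)
    (A B : Matrix n n R) : U * A * V * (U * B * V) = U * (A * B) * V := by
  simp only [Matrix.mul_assoc, ← Matrix.mul_assoc V U, hVU, one_mul]

lemma trace_mul_mul_conj_of_mul_eq_one [CommSemiring R] {U V : Matrix n n R} (hVU : V * U = 1)
    (A B C : Matrix n n R) :
    trace (U * A * V * (U * B * V) * (U * C * V)) = trace (A * B * C) := by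
  rw [conj_mul_conj_of_mul_eq_one hVU, conj_mul_conj_of_mul_eq_one hVU,
    trace_conj_of_mul_eq_one hVU]

lemma not_exists_unitary_conj_neg_of_trace_ne_zero [CommRing R] [StarRing R]
    [IsAddTorsionFree R] {A B C : Matrix n n R} (h : trace (A * B * C) ≠ 0) :
    ¬ ∃ U : Matrix n n R, U ∈ unitaryGroup n R ∧
      U * A * Uᴴ = -A ∧ U * B * Uᴴ = B ∧ U * C * Uᴴ = C := by
  rintro ⟨U, hU, hA, hB, hC⟩
  have hUU : Uᴴ * U = 1 := mem_unitaryGroup_iff'.mp hU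
  have h_neg := trace_mul_mul_conj_of_mul_eq_one hUU A B C
  rw [hA, hB, hC, Matrix.neg_mul, Matrix.neg_mul, trace_neg, eq_comm, self_eq_neg] at h_neg
  exact h h_neg

end Matrix

lemma ofReal_sqrt_two_sq : (Real.sqrt 2 : ℂ) ^ 2 = 2 := by
  rw [← ofReal_pow, Real.sq_sqrt zero_le_two, ofReal_ofNat]

lemma inv_sqrt_two_sq : ((Real.sqrt 2 : ℂ))⁻¹ ^ 2 = 2⁻¹ := by
  rw [inv_pow, ofReal_sqrt_two_sq]

lemma A_mem_unitaryGroup :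
    A₁ ∈ unitaryGroup (Fin 2) ℂ ∧ A₂ ∈ unitaryGroup (Fin 2) ℂ ∧ A₃ ∈ unitaryGroup (Fin 2) ℂ := by
  refine ⟨?_, ?_, ?_⟩ <;> rw [mem_unitaryGroup_iff] <;> ext i j <;> fin_cases i <;> fin_cases j <;>
    simp [A₁, A₂, A₃, mul_apply, Fin.sum_univ_two, one_apply, map_ofNat] <;>
    ring_nf <;> simp only [I_sq, inv_sqrt_two_sq] <;> ring

lemma det_smul_one_add_smul_A (z₀ z₁ z₂ z₃ : ℂ) :
    (z₀ • (1 : Matrix (Fin 2) (Fin 2) ℂ) + z₁ • A₁ + z₂ • A₂ + z₃ • A₃).det =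
      z₀ ^ 2 + z₀ * (z₂ + z₃) - z₁ ^ 2 + z₂ ^ 2 + z₃ ^ 2 := by
  simp [A₁, A₂, A₃, det_fin_two, one_fin_two]
  ring_nf
  simp only [I_sq, inv_sqrt_two_sq]
  ring

lemma trace_A₁_mul_A₂_mul_A₃ : trace (A₁ * A₂ * A₃) = -(Real.sqrt 2 : ℂ) * I := by
  have h0 : (Real.sqrt 2 : ℂ) ≠ 0 := by simp
  rw [A₁, A₂, A₃, mul_fin_two, mul_fin_two, trace_fin_two_of]
  field_simp
  linear_combination (4 * I * ((Real.sqrt 2 : ℂ) ^ 2 + 1)) * ofReal_sqrt_two_sq +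
    (2 * (Real.sqrt 2 : ℂ) ^ 2 * I) * I_sq

/-- The two inequivalent irreducible unitary representations `ρ₊, ρ₋` of `GL₃(ℤ/3ℤ)` determined
by the unitary matrices `A₁, A₂, A₃`: the two characteristic polynomials coincide,
`det(z₀I ± z₁A₁ + z₂A₂ + z₃A₃) = z₀² + z₀(z₂ + z₃) − z₁² + z₂² + z₃²`, yet no unitary `U`
conjugates `(A₁, A₂, A₃)` to `(−A₁, A₂, A₃)`. -/
theorem stmt14 :
    (A₁ ∈ Matrix.unitaryGroup (Fin 2) ℂ ∧ A₂ ∈ Matrix.unitaryGroup (Fin 2) ℂ ∧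
      A₃ ∈ Matrix.unitaryGroup (Fin 2) ℂ) ∧
    (∀ z₀ z₁ z₂ z₃ : ℂ,
      (z₀ • (1 : Matrix (Fin 2) (Fin 2) ℂ) + z₁ • A₁ + z₂ • A₂ + z₃ • A₃).det =
        z₀ ^ 2 + z₀ * (z₂ + z₃) - z₁ ^ 2 + z₂ ^ 2 + z₃ ^ 2 ∧
      (z₀ • (1 : Matrix (Fin 2) (Fin 2) ℂ) - z₁ • A₁ + z₂ • A₂ + z₃ • A₃).det =
        z₀ ^ 2 + z₀ * (z₂ + z₃) - z₁ ^ 2 + z₂ ^ 2 + z₃ ^ 2) ∧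
    ¬ ∃ U : Matrix (Fin 2) (Fin 2) ℂ, U ∈ Matrix.unitaryGroup (Fin 2) ℂ ∧
      U * A₁ * Uᴴ = -A₁ ∧ U * A₂ * Uᴴ = A₂ ∧ U * A₃ * Uᴴ = A₃ := by
  refine ⟨A_mem_unitaryGroup, fun z₀ z₁ z₂ z₃ => ⟨det_smul_one_add_smul_A z₀ z₁ z₂ z₃, ?_⟩,
    not_exists_unitary_conj_neg_of_trace_ne_zero ?_⟩
  · rw [sub_eq_add_neg, ← neg_smul, det_smul_one_add_smul_A, neg_sq]
  · rw [trace_A₁_mul_A₂_mul_A₃]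
    simp
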